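/- arXiv:2207.03662 — 3 statements merged into one kernel-verified Lean document; each statement's English description precedes it below -/
import Mathlib

section
/- Let P, P' : ℝ → Prop be time-indexed predicates and let t, a, τ, b ∈ ℝ with 0 ≤ a ≤ τ ≤ b. Then the until formula (P U_{[a,b]} P') holds at time t, i.e. (∃ t' ∈ [t+a, t+b], P' t' ∧ ∀ s ∈ [t, t'], P s), if and only if [∃ t' ∈ [t+a, t+τ), P' t' ∧ ∀ s ∈ [t, t'], P s] ∨ [(∀ s ∈ [t, t+τ), P s) ∧ ((P (t+τ) ∧ P' (t+τ)) ∨ (∃ t' ∈ (t+τ, t+b], P' t' ∧ ∀ s ∈ [t, t'], P s))]. -/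
namespace Set

variable {α : Type*} [LinearOrder α]

theorem exists_mem_Icc_iff_split {Q : α → Prop} {lo c hi : α} (hlo : lo ≤ c) (hhi : c ≤ hi) :
    (∃ x ∈ Icc lo hi, Q x) ↔ (∃ x ∈ Ico lo c, Q x) ∨ Q c ∨ ∃ x ∈ Ioc c hi, Q x := by
  rw [← Ico_union_Icc_eq_Icc hlo hhi, ← Ioc_insert_left hhi]
  simp only [mem_union, or_and_right, exists_or, exists_mem_insert]

theorem forall_mem_Icc_iff_forall_mem_Ico_and {P : α → Prop} {t c : α} (htc : t ≤ c) :
    (∀ s ∈ Icc t c, P s) ↔ (∀ s ∈ Ico t c, P s) ∧ P c := by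
  rw [← Ico_insert_right htc, forall_mem_insert, and_comm]

end Set

open Set

theorem exists_until_Icc_iff_split {α : Type*} [LinearOrder α] (P P' : α → Prop)
    {t lo c hi : α} (htlo : t ≤ lo) (hlo : lo ≤ c) (hhi : c ≤ hi) :
    (∃ t' ∈ Icc lo hi, P' t' ∧ ∀ s ∈ Icc t t', P s) ↔
      ((∃ t' ∈ Ico lo c, P' t' ∧ ∀ s ∈ Icc t t', P s) ∨
        ((∀ s ∈ Ico t c, P s) ∧
          ((P c ∧ P' c) ∨ (∃ t' ∈ Ioc c hi, P' t' ∧ ∀ s ∈ Icc t t', P s)))) := by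
  have holds_before_c : (∃ t' ∈ Ioc c hi, P' t' ∧ ∀ s ∈ Icc t t', P s) → ∀ s ∈ Ico t c, P s :=
    fun ⟨t', ht', _, hP⟩ s hs => hP s (Ico_subset_Icc_self.trans (Icc_subset_Icc_right ht'.1.le) hs)
  rw [exists_mem_Icc_iff_split hlo hhi, forall_mem_Icc_iff_forall_mem_Ico_and (htlo.trans hlo)]
  constructor
  · rintro (hbefore | ⟨hP'c, hG, hPc⟩ | hafter)
    · exact .inl hbefore
    · exact .inr ⟨hG, .inl ⟨hPc, hP'c⟩⟩
    · exact .inr ⟨holds_before_c hafter, .inr hafter⟩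
  · rintro (hbefore | ⟨hG, ⟨hPc, hP'c⟩ | hafter⟩)
    · exact .inl hbefore
    · exact .inr (.inl ⟨hP'c, hG, hPc⟩)
    · exact .inr (.inr hafter)

/-- Proposition 1 (syntactic separation of until at time τ), closed interval [a,b]. -/
theorem until_separation_Icc (P P' : ℝ → Prop) (t a τ b : ℝ)
    (h0a : 0 ≤ a) (haτ : a ≤ τ) (hτb : τ ≤ b) :
    (∃ t' ∈ Set.Icc (t + a) (t + b), P' t' ∧ ∀ s ∈ Set.Icc t t', P s) ↔
      ((∃ t' ∈ Set.Ico (t + a) (t + τ), P' t' ∧ ∀ s ∈ Set.Icc t t', P s) ∨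
        ((∀ s ∈ Set.Ico t (t + τ), P s) ∧
          ((P (t + τ) ∧ P' (t + τ)) ∨
            (∃ t' ∈ Set.Ioc (t + τ) (t + b), P' t' ∧ ∀ s ∈ Set.Icc t t', P s)))) :=
  exists_until_Icc_iff_split P P' (by linarith) (by linarith) (by linarith)
end

section
/- Let P, P' : ℝ → Prop be time-indexed predicates and let t, a, τ, b ∈ ℝ with 0 ≤ a < τ < b. Then (∃ t' ∈ (t+a, t+b), P' t' ∧ ∀ s ∈ [t, t'], P s) if and only if [∃ t' ∈ (t+a, t+τ), P' t' ∧ ∀ s ∈ [t, t'], P s] ∨ [(∀ s ∈ [t, t+τ), P s) ∧ ((P (t+τ) ∧ P' (t+τ)) ∨ (∃ t' ∈ (t+τ, t+b), P' t' ∧ ∀ s ∈ [t, t'], P s))]. -/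
/-!
Split the window `(t + a, t + b)` of witness times at `t + τ` into `(t + a, t + τ)`, the point
`t + τ` and `(t + τ, t + b)`. A witness at `t + τ` means `P` holds on `[t, t + τ)` and at `t + τ`;
a witness beyond `t + τ` already forces `P` on `[t, t + τ)`, so that conjunct may be added for free.
-/

open Set

section UntilIn

variable {α : Type*} [LinearOrder α] (P Q : α → Prop) (t : α)

/-- The STL until `(P U_I Q)(t)` is `UntilIn P Q t (t + I)`: `S` is a set of absolute witness times. -/
def UntilIn (S : Set α) : Prop :=
  ∃ t' ∈ S, Q t' ∧ ∀ s ∈ Icc t t', P s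

variable {P Q t}

theorem untilIn_union {S T : Set α} :
    UntilIn P Q t (S ∪ T) ↔ UntilIn P Q t S ∨ UntilIn P Q t T := by
  simp only [UntilIn, mem_union, or_and_right, exists_or]

theorem untilIn_insert {c : α} {S : Set α} (hc : t ≤ c) :
    UntilIn P Q t (insert c S) ↔ ((∀ s ∈ Ico t c, P s) ∧ P c ∧ Q c) ∨ UntilIn P Q t S := by
  simp only [UntilIn, exists_mem_insert, ← Ico_insert_right hc, forall_mem_insert]
  tauto

theorem UntilIn.forall_Ico {c : α} {S : Set α} (hS : ∀ t' ∈ S, c ≤ t') (h : UntilIn P Q t S) :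
    ∀ s ∈ Ico t c, P s := by
  obtain ⟨t', ht', -, hP⟩ := h
  intro s hs
  exact hP s (Ico_subset_Icc_self.trans (Icc_subset_Icc_right (hS t' ht')) hs)

theorem untilIn_Ioo_split {lo c hi : α} (hc : t ≤ c) (hlo : lo < c) (hhi : c < hi) :
    UntilIn P Q t (Ioo lo hi) ↔ UntilIn P Q t (Ioo lo c) ∨
      ((∀ s ∈ Ico t c, P s) ∧ ((P c ∧ Q c) ∨ UntilIn P Q t (Ioo c hi))) := by
  have hlate : UntilIn P Q t (Ioo c hi) → ∀ s ∈ Ico t c, P s :=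
    fun h => h.forall_Ico fun _ hs => hs.1.le
  rw [← Ioc_union_Ioo_eq_Ioo hlo.le hhi, ← Ioo_insert_right hlo, untilIn_union, untilIn_insert hc]
  tauto

end UntilIn

/-- Proposition 1 variant: syntactic separation of until at time τ for (a,b). -/
theorem until_separation_Ioo (P P' : ℝ → Prop) (t a τ b : ℝ)
    (h0a : 0 ≤ a) (haτ : a < τ) (hτb : τ < b) :
    (∃ t' ∈ Set.Ioo (t + a) (t + b), P' t' ∧ ∀ s ∈ Set.Icc t t', P s) ↔
      ((∃ t' ∈ Set.Ioo (t + a) (t + τ), P' t' ∧ ∀ s ∈ Set.Icc t t', P s) ∨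
        ((∀ s ∈ Set.Ico t (t + τ), P s) ∧
          ((P (t + τ) ∧ P' (t + τ)) ∨
            (∃ t' ∈ Set.Ioo (t + τ) (t + b), P' t' ∧ ∀ s ∈ Set.Icc t t', P s)))) :=
  untilIn_Ioo_split (by linarith) (by linarith) (by linarith)
end

section
/- Let P, P' : ℝ → Prop be time-indexed predicates and let t, a, τ, b ∈ ℝ with 0 ≤ a ≤ τ ≤ b. If (∃ t' ∈ [t+a, t+b], P' t' ∧ ∀ s ∈ [t, t'], P s), then [∃ t' ∈ [t+a, t+τ), P' t' ∧ ∀ s ∈ [t, t'], P s] ∨ [(∀ s ∈ [t+a, t+τ), P s) ∧ ((P (t+τ) ∧ P' (t+τ)) ∨ (∃ t' ∈ (t+τ, t+b], P' t' ∧ ∀ s ∈ [t, t'], P s))]. -/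
theorem until_separation_forward_general (P P' : ℝ → Prop) (t a τ b : ℝ)
    (h0a : 0 ≤ a)
    (h : ∃ t' ∈ Set.Icc (t + a) (t + b), P' t' ∧ ∀ s ∈ Set.Icc t t', P s) :
    (∃ t' ∈ Set.Ico (t + a) (t + τ), P' t' ∧ ∀ s ∈ Set.Icc t t', P s) ∨
      ((∀ s ∈ Set.Ico (t + a) (t + τ), P s) ∧
        ((P (t + τ) ∧ P' (t + τ)) ∨
          (∃ t' ∈ Set.Ioc (t + τ) (t + b), P' t' ∧ ∀ s ∈ Set.Icc t t', P s))) := by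
  obtain ⟨t', ⟨hat', ht'b⟩, hP', hP⟩ := h
  have hG (hτt' : t + τ ≤ t') : ∀ s ∈ Set.Ico (t + a) (t + τ), P s :=
    fun s hs => hP s ⟨by linarith [hs.1], hs.2.le.trans hτt'⟩
  rcases lt_trichotomy t' (t + τ) with hlt | rfl | hgt
  · exact Or.inl ⟨t', ⟨hat', hlt⟩, hP', hP⟩
  · exact Or.inr ⟨hG le_rfl, Or.inl ⟨hP _ ⟨by linarith, le_rfl⟩, hP'⟩⟩
  · exact Or.inr ⟨hG hgt.le, Or.inr ⟨t', ⟨hgt, ht'b⟩, hP', hP⟩⟩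

/-- Forward (soundness) direction of the paper's Proposition 1 as stated there,
with the globally clause G_{[a,τ)} taken over [t+a, t+τ). -/
theorem until_separation_forward (P P' : ℝ → Prop) (t a τ b : ℝ)
    (h0a : 0 ≤ a) (haτ : a ≤ τ) (hτb : τ ≤ b)
    (h : ∃ t' ∈ Set.Icc (t + a) (t + b), P' t' ∧ ∀ s ∈ Set.Icc t t', P s) :
    (∃ t' ∈ Set.Ico (t + a) (t + τ), P' t' ∧ ∀ s ∈ Set.Icc t t', P s) ∨
      ((∀ s ∈ Set.Ico (t + a) (t + τ), P s) ∧
        ((P (t + τ) ∧ P' (t + τ)) ∨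
          (∃ t' ∈ Set.Ioc (t + τ) (t + b), P' t' ∧ ∀ s ∈ Set.Icc t t', P s))) :=
  until_separation_forward_general P P' t a τ b h0a h
end
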